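/- arXiv:1010.0658 — 10 statements merged into one kernel-verified Lean document; each statement's English description precedes it below -/
import Mathlib

section
/- Let ω be a C¹ one-form on E := EuclideanSpace ℝ (Fin m) which is closed, i.e. ((fderiv ℝ ω y) u) v = ((fderiv ℝ ω y) v) u for all y, u, v ∈ E. Let γ₀, γ₁ : ℝ → E be C¹ paths with γ₀ 0 = γ₁ 0 and γ₀ 1 = γ₁ 1. Then ∫ t in (0,1), ω (γ₀ t) (deriv γ₀ t) = ∫ t in (0,1), ω (γ₁ t) (deriv γ₁ t). (This is the fact, used to define the Ismagilov–Losik–Michor cocycle, that the integral of the closed one-form g^*λ − λ depends only on the endpoints of the path.) -/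
open intervalIntegral

theorem integral_apply_deriv_eq_sub_of_hasFDerivAt {E F : Type*} [NormedAddCommGroup E]
    [NormedSpace ℝ E] [NormedAddCommGroup F] [NormedSpace ℝ F] [CompleteSpace F]
    {f : E → F} {ω : E → E →L[ℝ] F} (hf : ∀ x, HasFDerivAt f (ω x) x) (hω : Continuous ω)
    {γ : ℝ → E} (hγ : ContDiff ℝ 1 γ) (a b : ℝ) :
    ∫ t in a..b, ω (γ t) (deriv γ t) = f (γ b) - f (γ a) := by
  have hderiv : ∀ t ∈ Set.uIcc a b, HasDerivAt (f ∘ γ) (ω (γ t) (deriv γ t)) t := fun t _ ↦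
    (hf (γ t)).comp_hasDerivAt t (hγ.differentiable one_ne_zero t).hasDerivAt
  have hcont : Continuous fun t ↦ ω (γ t) (deriv γ t) :=
    (hω.comp hγ.continuous).clm_apply (hγ.continuous_deriv le_rfl)
  exact integral_eq_sub_of_hasDerivAt hderiv (hcont.intervalIntegrable a b)

/-- The integral of a closed `C¹` one-form along a `C¹` path depends only on the
endpoints of the path.  This is the fact used to define the Ismagilov–Losik–Michor
cocycle: the integral of the closed one-form `g^*λ − λ` depends only on the endpoints. -/
theorem closed_oneForm_integral_depends_only_on_endpoints {m : ℕ}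
    (ω : EuclideanSpace ℝ (Fin m) → (EuclideanSpace ℝ (Fin m) →L[ℝ] ℝ))
    (hω : ContDiff ℝ 1 ω)
    (hclosed : ∀ y u v : EuclideanSpace ℝ (Fin m),
      ((fderiv ℝ ω y) u) v = ((fderiv ℝ ω y) v) u)
    (γ₀ γ₁ : ℝ → EuclideanSpace ℝ (Fin m))
    (hγ₀ : ContDiff ℝ 1 γ₀) (hγ₁ : ContDiff ℝ 1 γ₁)
    (h₀ : γ₀ 0 = γ₁ 0) (h₁ : γ₀ 1 = γ₁ 1) :
    ∫ t in (0:ℝ)..1, ω (γ₀ t) (deriv γ₀ t) = ∫ t in (0:ℝ)..1, ω (γ₁ t) (deriv γ₁ t) := by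
  obtain ⟨f, hf⟩ := convex_univ.exists_forall_hasFDerivAt_of_fderiv_symmetric isOpen_univ
    (hω.differentiable one_ne_zero).differentiableOn fun y _ ↦ hclosed y
  have hpotential : ∀ x, HasFDerivAt f (ω x) x := fun x ↦ hf x (Set.mem_univ x)
  rw [integral_apply_deriv_eq_sub_of_hasFDerivAt hpotential hω.continuous hγ₀,
    integral_apply_deriv_eq_sub_of_hasFDerivAt hpotential hω.continuous hγ₁, h₀, h₁]
end

section
/- Let λ be a smooth one-form on E := EuclideanSpace ℝ (Fin m), let x ∈ E, and let f, g, h : E → E be smooth maps each symplectic for λ (i.e. f^*λ − λ, g^*λ − λ and h^*λ − λ are closed). Then the Ismagilov–Losik–Michor function 𝔊 := 𝔊_{x,λ} satisfies the inhomogeneous two-cocycle identity 𝔊(g,h) − 𝔊(f ∘ g, h) + 𝔊(f, g ∘ h) − 𝔊(f,g) = 0. -/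
open Metric Set


open MeasureTheory intervalIntegral

noncomputable section

/-- The pullback `g^*λ` of a one-form `λ` by a differentiable map `g`. -/
def oneFormPullback {m : ℕ} (g : EuclideanSpace ℝ (Fin m) → EuclideanSpace ℝ (Fin m))
    (lam : EuclideanSpace ℝ (Fin m) → (EuclideanSpace ℝ (Fin m) →L[ℝ] ℝ)) :
    EuclideanSpace ℝ (Fin m) → (EuclideanSpace ℝ (Fin m) →L[ℝ] ℝ) :=
  fun y => (lam (g y)).comp (fderiv ℝ g y)

/-- A one-form is closed if its derivative is symmetric. -/
def IsClosedOneForm {m : ℕ}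
    (ω : EuclideanSpace ℝ (Fin m) → (EuclideanSpace ℝ (Fin m) →L[ℝ] ℝ)) : Prop :=
  ∀ y u v : EuclideanSpace ℝ (Fin m), ((fderiv ℝ ω y) u) v = ((fderiv ℝ ω y) v) u

/-- A map `g` is symplectic for `λ` if `g^*λ − λ` is closed, i.e. `g` preserves `dλ`. -/
def IsSymplecticFor {m : ℕ} (g : EuclideanSpace ℝ (Fin m) → EuclideanSpace ℝ (Fin m))
    (lam : EuclideanSpace ℝ (Fin m) → (EuclideanSpace ℝ (Fin m) →L[ℝ] ℝ)) : Prop :=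
  IsClosedOneForm (fun y => oneFormPullback g lam y - lam y)

/-- The Ismagilov–Losik–Michor two-cocycle `𝔊_{x,λ}(g,h)`: the line integral of
`g^*λ − λ` along the straight segment from `x` to `h x`. -/
def ILM {m : ℕ} (x : EuclideanSpace ℝ (Fin m))
    (lam : EuclideanSpace ℝ (Fin m) → (EuclideanSpace ℝ (Fin m) →L[ℝ] ℝ))
    (g h : EuclideanSpace ℝ (Fin m) → EuclideanSpace ℝ (Fin m)) : ℝ :=
  ∫ t in (0:ℝ)..1,
    (oneFormPullback g lam (x + t • (h x - x)) - lam (x + t • (h x - x))) (h x - x)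

set_option maxHeartbeats 1000000

/-- The primitive of a closed one-form obtained by radial line integration from `x`. -/
theorem hasFDerivAt_primitive (ω : EuclideanSpace ℝ (Fin m) → (EuclideanSpace ℝ (Fin m) →L[ℝ] ℝ))
    (hω : ContDiff ℝ (⊤ : ℕ∞) ω) (hcl : IsClosedOneForm ω) (x y : EuclideanSpace ℝ (Fin m)) :
    HasFDerivAt (fun z => ∫ t in (0:ℝ)..1, ω (x + t • (z - x)) (z - x)) (ω y) y := by
  have hωc : Continuous ω := hω.continuous
  have hDω : Continuous (fderiv ℝ ω) := (hω.fderiv_right (by exact_mod_cast (le_top : (⊤ : ℕ∞) + 1 ≤ ⊤) : ((⊤ : ℕ∞) : WithTop ℕ∞) + 1 ≤ ((⊤ : ℕ∞) : WithTop ℕ∞))).continuous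
  have hωd : Differentiable ℝ ω := hω.differentiable (by simp)
  -- bounds on a compact set
  obtain ⟨C₁, hC₁⟩ := (isCompact_closedBall x (‖y - x‖ + 1)).exists_bound_of_continuousOn
    hωc.continuousOn
  obtain ⟨C₂, hC₂⟩ := (isCompact_closedBall x (‖y - x‖ + 1)).exists_bound_of_continuousOn
    (f := fderiv ℝ ω) hDω.continuousOn
  set G' : EuclideanSpace ℝ (Fin m) → ℝ → (EuclideanSpace ℝ (Fin m) →L[ℝ] ℝ) :=
    fun z t => ω (x + t • (z - x)) + (t • fderiv ℝ ω (x + t • (z - x))).flip (z - x) with hG'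
  have memK : ∀ (t : ℝ), t ∈ Set.Ioc (0:ℝ) 1 → ∀ z ∈ ball y 1,
      x + t • (z - x) ∈ closedBall x (‖y - x‖ + 1) := by
    intro t ht z hz
    rw [mem_closedBall, dist_eq_norm]
    have h1 : ‖x + t • (z - x) - x‖ = |t| * ‖z - x‖ := by
      rw [add_sub_cancel_left, norm_smul, Real.norm_eq_abs]
    have h2 : ‖z - x‖ ≤ ‖y - x‖ + 1 := by
      have htri : ‖z - x‖ ≤ ‖z - y‖ + ‖y - x‖ := by
        have : z - x = (z - y) + (y - x) := by abel
        rw [this]; exact norm_add_le _ _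
      calc ‖z - x‖ ≤ ‖z - y‖ + ‖y - x‖ := htri
        _ ≤ 1 + ‖y - x‖ := by
            have := mem_ball_iff_norm.mp hz
            linarith
        _ = ‖y - x‖ + 1 := by ring
    have habs : |t| ≤ 1 := abs_le.mpr ⟨by linarith [ht.1], ht.2⟩
    rw [h1]
    nlinarith [norm_nonneg (z - x), abs_nonneg t]
  have hdiff : ∀ (t : ℝ) (z : EuclideanSpace ℝ (Fin m)),
      HasFDerivAt (fun w => ω (x + t • (w - x)) (w - x)) (G' z t) z := by
    intro t z
    have hι : HasFDerivAt (fun w : EuclideanSpace ℝ (Fin m) => x + t • (w - x))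
        (t • ContinuousLinearMap.id ℝ (EuclideanSpace ℝ (Fin m))) z :=
      (((hasFDerivAt_id z).sub_const x).const_smul t).const_add x
    have hc : HasFDerivAt (fun w => ω (x + t • (w - x)))
        ((fderiv ℝ ω (x + t • (z - x))).comp (t • ContinuousLinearMap.id ℝ _)) z :=
      ((hωd _).hasFDerivAt).comp z hι
    have hu : HasFDerivAt (fun w : EuclideanSpace ℝ (Fin m) => w - x)
        (ContinuousLinearMap.id ℝ _) z := (hasFDerivAt_id z).sub_const x
    have := hc.clm_apply hu
    refine this.congr_fderiv ?_
    ext v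
    simp [hG', ContinuousLinearMap.smul_apply, _root_.map_smul, mul_comm]
  have key : HasFDerivAt (fun z => ∫ t in (0:ℝ)..1, ω (x + t • (z - x)) (z - x))
      (∫ t in (0:ℝ)..1, G' y t) y := by
    apply intervalIntegral.hasFDerivAt_integral_of_dominated_of_fderiv_le
      (s := ball y 1) (bound := fun _ => C₁ + C₂ * (‖y - x‖ + 1)) (ball_mem_nhds y one_pos)
    · filter_upwards with z
      exact ((hωc.comp (continuous_const.add (continuous_id.smul continuous_const))).clm_apply (continuous_const)).aestronglyMeasurable
    · exact ((hωc.comp (continuous_const.add (continuous_id.smul continuous_const))).clm_apply continuous_const).intervalIntegrable 0 1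
    · apply Continuous.aestronglyMeasurable
      apply Continuous.add (hωc.comp (continuous_const.add (continuous_id.smul continuous_const)))
      have : (fun t : ℝ => (t • fderiv ℝ ω (x + t • (y - x))).flip (y - x))
          = fun t : ℝ => t • ((fderiv ℝ ω (x + t • (y - x))).flip (y - x)) := by
        funext t; ext v; simp
      rw [this]
      exact continuous_id.smul (((ContinuousLinearMap.flipₗᵢ ℝ
        (EuclideanSpace ℝ (Fin m)) (EuclideanSpace ℝ (Fin m)) ℝ).continuous.comp
        (hDω.comp (continuous_const.add (continuous_id.smul continuous_const)))).clm_apply continuous_const)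
    · rw [Set.uIoc_of_le (zero_le_one)]
      filter_upwards with t ht z hz
      have hp := memK t ht z hz
      have h1 : ‖ω (x + t • (z - x))‖ ≤ C₁ := hC₁ _ hp
      have h2 : ‖fderiv ℝ ω (x + t • (z - x))‖ ≤ C₂ := hC₂ _ hp
      have habs : |t| ≤ 1 := abs_le.mpr ⟨by linarith [ht.1], ht.2⟩
      have hz' : ‖z - x‖ ≤ ‖y - x‖ + 1 := by
        calc ‖z - x‖ ≤ ‖z - y‖ + ‖y - x‖ := by
              have : z - x = (z - y) + (y - x) := by abel
              rw [this]; exact norm_add_le _ _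
          _ ≤ 1 + ‖y - x‖ := by have := mem_ball_iff_norm.mp hz; linarith
          _ = ‖y - x‖ + 1 := by ring
      calc ‖G' z t‖ ≤ ‖ω (x + t • (z - x))‖ + ‖(t • fderiv ℝ ω (x + t • (z - x))).flip (z - x)‖ :=
            norm_add_le _ _
        _ ≤ C₁ + C₂ * (‖y - x‖ + 1) := by
            have h3 : ‖(t • fderiv ℝ ω (x + t • (z - x))).flip (z - x)‖
                ≤ |t| * ‖fderiv ℝ ω (x + t • (z - x))‖ * ‖z - x‖ := by
              calc ‖(t • fderiv ℝ ω (x + t • (z - x))).flip (z - x)‖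
                  ≤ ‖(t • fderiv ℝ ω (x + t • (z - x))).flip‖ * ‖z - x‖ :=
                    ContinuousLinearMap.le_opNorm _ _
                _ = ‖t • fderiv ℝ ω (x + t • (z - x))‖ * ‖z - x‖ := by
                    rw [ContinuousLinearMap.opNorm_flip]
                _ = |t| * ‖fderiv ℝ ω (x + t • (z - x))‖ * ‖z - x‖ := by
                    rw [@norm_smul _ _ _ _ _ NormedSpace.toNormSMulClass t (fderiv ℝ ω (x + t • (z - x))), Real.norm_eq_abs]
            have h4 : |t| * ‖fderiv ℝ ω (x + t • (z - x))‖ ≤ C₂ :=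
              le_trans (mul_le_of_le_one_left (norm_nonneg (fderiv ℝ ω (x + t • (z - x)))) habs) h2
            have h5 : |t| * ‖fderiv ℝ ω (x + t • (z - x))‖ * ‖z - x‖ ≤ C₂ * (‖y - x‖ + 1) :=
              mul_le_mul h4 hz' (norm_nonneg _)
                (le_trans (mul_nonneg (abs_nonneg t) (norm_nonneg (fderiv ℝ ω (x + t • (z - x))))) h4)
            linarith
    · exact intervalIntegrable_const
    · filter_upwards with t _ z _
      exact hdiff t z
  -- now compute the integral of G' y
  have hGψ : G' y = fun t : ℝ =>
      ω (x + t • (y - x)) + t • ((fderiv ℝ ω (x + t • (y - x))) (y - x)) := by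
    funext t; ext v
    simp only [hG', ContinuousLinearMap.add_apply, ContinuousLinearMap.flip_apply,
      ContinuousLinearMap.smul_apply, smul_eq_mul]
    rw [hcl (x + t • (y - x)) v (y - x)]
  have hφ : ∀ t : ℝ, HasDerivAt (fun s : ℝ => s • ω (x + s • (y - x))) (G' y t) t := by
    intro t
    have h1 : HasDerivAt (fun s : ℝ => x + s • (y - x)) (y - x) t := by
      simpa using ((hasDerivAt_id t).smul_const (y - x)).const_add x
    have h2 : HasDerivAt (fun s : ℝ => ω (x + s • (y - x)))
        ((fderiv ℝ ω (x + t • (y - x))) (y - x)) t :=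
      ((hωd _).hasFDerivAt).comp_hasDerivAt t h1
    have h3 := (hasDerivAt_id t).smul h2
    rw [hGψ]
    refine h3.congr_deriv ?_
    simp [add_comm]
  have hψc : Continuous (G' y) := by
    rw [hGψ]
    exact (hωc.comp (continuous_const.add (continuous_id.smul continuous_const))).add
      (continuous_id.smul (((hDω.comp (continuous_const.add (continuous_id.smul continuous_const))).clm_apply continuous_const)))
  have hint : (∫ t in (0:ℝ)..1, G' y t) = ω y := by
    rw [integral_eq_sub_of_hasDerivAt (fun t _ => hφ t) (hψc.intervalIntegrable 0 1)]
    have : x + (1:ℝ) • (y - x) = y := by simp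
    simp [this]
  rwa [hint] at key


/-- The Ismagilov–Losik–Michor function satisfies the two-cocycle identity. -/

theorem ILM_is_two_cocycle {m : ℕ}
    (lam : EuclideanSpace ℝ (Fin m) → (EuclideanSpace ℝ (Fin m) →L[ℝ] ℝ))
    (hlam : ContDiff ℝ (⊤ : ℕ∞) lam) (x : EuclideanSpace ℝ (Fin m))
    (f g h : EuclideanSpace ℝ (Fin m) → EuclideanSpace ℝ (Fin m))
    (hf : ContDiff ℝ (⊤ : ℕ∞) f) (hg : ContDiff ℝ (⊤ : ℕ∞) g) (hh : ContDiff ℝ (⊤ : ℕ∞) h)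
    (hfs : IsSymplecticFor f lam) (hgs : IsSymplecticFor g lam)
    (hhs : IsSymplecticFor h lam) :
    ILM x lam g h - ILM x lam (f ∘ g) h + ILM x lam f (g ∘ h) - ILM x lam f g = 0 := by
  have hone : (((⊤ : ℕ∞) : WithTop ℕ∞) + 1 ≤ ((⊤ : ℕ∞) : WithTop ℕ∞)) := by exact_mod_cast (le_top : (⊤ : ℕ∞) + 1 ≤ ⊤)
  -- the closed one-form `ω = f^*λ − λ`
  set ω : EuclideanSpace ℝ (Fin m) → (EuclideanSpace ℝ (Fin m) →L[ℝ] ℝ) :=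
    fun y => oneFormPullback f lam y - lam y with hωdef
  have hωsm : ContDiff ℝ (⊤ : ℕ∞) ω :=
    ((hlam.comp hf).clm_comp (hf.fderiv_right hone)).sub hlam
  have hcl : IsClosedOneForm ω := hfs
  -- its primitive based at `x`
  set P : EuclideanSpace ℝ (Fin m) → ℝ :=
    fun y => ∫ t in (0:ℝ)..1, ω (x + t • (y - x)) (y - x) with hPdef
  have hP : ∀ y, HasFDerivAt P (ω y) y := fun y => hasFDerivAt_primitive ω hωsm hcl x y
  -- the straight segment from `x` to `h x` and its image under `g`
  set c : ℝ → EuclideanSpace ℝ (Fin m) := fun t => x + t • (h x - x) with hcdef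
  have hcc : Continuous c := continuous_const.add (continuous_id.smul continuous_const)
  have hcd : ∀ t : ℝ, HasDerivAt c (h x - x) t := by
    intro t
    simpa [hcdef] using ((hasDerivAt_id t).smul_const (h x - x)).const_add x
  set γ : ℝ → EuclideanSpace ℝ (Fin m) := fun t => g (c t) with hγdef
  have hγc : Continuous γ := hg.continuous.comp hcc
  have hγ : ∀ t : ℝ, HasDerivAt γ ((fderiv ℝ g (c t)) (h x - x)) t := fun t =>
    ((hg.differentiable (by simp) (c t)).hasFDerivAt).comp_hasDerivAt t (hcd t)
  have hγ'c : Continuous fun t => (fderiv ℝ g (c t)) (h x - x) :=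
    (((hg.fderiv_right hone).continuous.comp hcc).clm_apply continuous_const)
  -- the fundamental theorem of calculus along `γ`
  have hPath : (∫ t in (0:ℝ)..1, ω (γ t) ((fderiv ℝ g (c t)) (h x - x)))
      = P (γ 1) - P (γ 0) := by
    exact intervalIntegral.integral_eq_sub_of_hasDerivAt (f := fun t => P (γ t))
      (fun t _ => (hP (γ t)).comp_hasDerivAt t (hγ t))
      (((hωsm.continuous.comp hγc).clm_apply hγ'c).intervalIntegrable 0 1)
  have hγ1 : γ 1 = g (h x) := by simp [hγdef, hcdef]
  have hγ0 : γ 0 = g x := by simp [hγdef, hcdef]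
  -- continuity of the various integrands
  have hcont : ∀ k : EuclideanSpace ℝ (Fin m) → EuclideanSpace ℝ (Fin m), ContDiff ℝ (⊤ : ℕ∞) k →
      Continuous (fun p => oneFormPullback k lam p - lam p) := fun k hk =>
    (((hlam.comp hk).clm_comp (hk.fderiv_right hone)).sub hlam).continuous
  have hIntA : IntervalIntegrable
      (fun t => (oneFormPullback (f ∘ g) lam (c t) - lam (c t)) (h x - x)) volume 0 1 :=
    (((hcont (f ∘ g) (hf.comp hg)).comp hcc).clm_apply continuous_const).intervalIntegrable 0 1
  have hIntB : IntervalIntegrable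
      (fun t => (oneFormPullback g lam (c t) - lam (c t)) (h x - x)) volume 0 1 :=
    (((hcont g hg).comp hcc).clm_apply continuous_const).intervalIntegrable 0 1
  -- the cocycle computation
  have e2 : ILM x lam (f ∘ g) h - ILM x lam g h = P (g (h x)) - P (g x) := by
    rw [← hγ1, ← hγ0, ← hPath]
    show (∫ t in (0:ℝ)..1, (oneFormPullback (f ∘ g) lam (c t) - lam (c t)) (h x - x))
        - (∫ t in (0:ℝ)..1, (oneFormPullback g lam (c t) - lam (c t)) (h x - x)) = _
    rw [← intervalIntegral.integral_sub hIntA hIntB]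
    apply intervalIntegral.integral_congr
    intro t _
    have hchain : fderiv ℝ (f ∘ g) (c t) = (fderiv ℝ f (g (c t))).comp (fderiv ℝ g (c t)) :=
      fderiv_comp (c t) (hf.differentiable (by simp) (g (c t))) (hg.differentiable (by simp) (c t))
    simp only [oneFormPullback, hωdef, hγdef, ContinuousLinearMap.sub_apply,
      ContinuousLinearMap.comp_apply, hchain, Function.comp_apply]
    ring
  have e3 : ILM x lam f (g ∘ h) = P (g (h x)) := by
    simp only [ILM, hPdef, hωdef, Function.comp_apply]
  have e4 : ILM x lam f g = P (g x) := by
    simp only [ILM, hPdef, hωdef]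
  linarith

end
end

section
/- Let λ be a smooth one-form on E := EuclideanSpace ℝ (Fin m), let x ∈ E, and let g, h : E → E be smooth maps each symplectic for λ (i.e. g^*λ − λ and h^*λ − λ are closed). Define 𝒦(g)(y) := ∫ t in (0,1), ((g^*λ − λ) (x + t • (y − x))) (y − x), the line integral of g^*λ − λ along the straight segment from x to y. Then for every y ∈ E, 𝒦(g ∘ h)(y) = 𝒦(g)(h y) + 𝒦(h)(y) − 𝒦(g)(h x); in particular 𝒦(g ∘ h) − 𝒦(g) ∘ h − 𝒦(h) is a constant function, so 𝒦 is a one-cocycle with values in functions modulo constants. -/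
open MeasureTheory intervalIntegral

noncomputable section

/-- `𝒦(g)(y)`: the line integral of `g^*λ − λ` along the straight segment from `x` to `y`. -/
def oneCocycleK {m : ℕ} (x : EuclideanSpace ℝ (Fin m))
    (lam : EuclideanSpace ℝ (Fin m) → (EuclideanSpace ℝ (Fin m) →L[ℝ] ℝ))
    (g : EuclideanSpace ℝ (Fin m) → EuclideanSpace ℝ (Fin m))
    (y : EuclideanSpace ℝ (Fin m)) : ℝ :=
  ∫ t in (0:ℝ)..1,
    (oneFormPullback g lam (x + t • (y - x)) - lam (x + t • (y - x))) (y - x)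

set_option maxHeartbeats 1000000 in
theorem poincare_hasFDerivAt {m : ℕ}
    (ω : EuclideanSpace ℝ (Fin m) → (EuclideanSpace ℝ (Fin m) →L[ℝ] ℝ))
    (hω : ContDiff ℝ (⊤ : ℕ∞) ω) (hcl : IsClosedOneForm ω) (x y : EuclideanSpace ℝ (Fin m)) :
    HasFDerivAt (fun z => ∫ t in (0:ℝ)..1, ω (x + t • (z - x)) (z - x)) (ω y) y := by
  have hfd : ContDiff ℝ (⊤ : ℕ∞) (fderiv ℝ ω) := hω.fderiv_right (by simp)
  set F' : EuclideanSpace ℝ (Fin m) → ℝ → (EuclideanSpace ℝ (Fin m) →L[ℝ] ℝ) := fun z t =>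
    (ω (x + t • (z - x))).comp (ContinuousLinearMap.id ℝ (EuclideanSpace ℝ (Fin m)))
      + ((fderiv ℝ ω (x + t • (z - x))).comp
          (t • ContinuousLinearMap.id ℝ (EuclideanSpace ℝ (Fin m)))).flip (z - x) with hF'
  have hzc : ∀ z : EuclideanSpace ℝ (Fin m),
      Continuous (fun t : ℝ => ω (x + t • (z - x)) (z - x)) := by
    intro z
    exact (hω.continuous.comp (by fun_prop)).clm_apply continuous_const
  have hp : Continuous (fun q : EuclideanSpace ℝ (Fin m) × ℝ => x + q.2 • (q.1 - x)) := by fun_prop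
  have hGcont : Continuous (fun q : EuclideanSpace ℝ (Fin m) × ℝ => F' q.1 q.2) := by
    apply Continuous.add
    · exact (hω.continuous.comp hp).clm_comp continuous_const
    · have h1 : Continuous (fun q : EuclideanSpace ℝ (Fin m) × ℝ =>
          (fderiv ℝ ω (x + q.2 • (q.1 - x))).comp (q.2 • ContinuousLinearMap.id ℝ (EuclideanSpace ℝ (Fin m)))) :=
        (hfd.continuous.comp hp).clm_comp (continuous_snd.smul continuous_const)
      have h2 : Continuous (fun q : EuclideanSpace ℝ (Fin m) × ℝ =>
          (ContinuousLinearMap.flipₗᵢ ℝ (EuclideanSpace ℝ (Fin m)) (EuclideanSpace ℝ (Fin m)) ℝ)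
            ((fderiv ℝ ω (x + q.2 • (q.1 - x))).comp (q.2 • ContinuousLinearMap.id ℝ (EuclideanSpace ℝ (Fin m))))) :=
        (ContinuousLinearMap.flipₗᵢ ℝ (EuclideanSpace ℝ (Fin m)) (EuclideanSpace ℝ (Fin m)) ℝ).continuous.comp h1
      exact h2.clm_apply (continuous_fst.sub continuous_const)
  obtain ⟨C, hC⟩ := ((isCompact_closedBall y 1).prod isCompact_Icc).exists_bound_of_continuousOn
    (s := Metric.closedBall y 1 ×ˢ Set.Icc (0:ℝ) 1) hGcont.continuousOn
  have h_diff : ∀ t : ℝ, ∀ z : EuclideanSpace ℝ (Fin m), HasFDerivAt (fun z => ω (x + t • (z - x)) (z - x)) (F' z t) z := by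
    intro t z
    have hγ : HasFDerivAt (fun z : EuclideanSpace ℝ (Fin m) => x + t • (z - x)) (t • ContinuousLinearMap.id ℝ (EuclideanSpace ℝ (Fin m))) z := by
      simpa using (((hasFDerivAt_id z).sub_const x).const_smul t).const_add x
    have hc : HasFDerivAt (fun z : EuclideanSpace ℝ (Fin m) => ω (x + t • (z - x)))
        ((fderiv ℝ ω (x + t • (z - x))).comp (t • ContinuousLinearMap.id ℝ (EuclideanSpace ℝ (Fin m)))) z :=
      ((hω.differentiable (by simp)).differentiableAt.hasFDerivAt).comp z hγ
    have hu : HasFDerivAt (fun z : EuclideanSpace ℝ (Fin m) => z - x) (ContinuousLinearMap.id ℝ (EuclideanSpace ℝ (Fin m))) z := by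
      simpa using (hasFDerivAt_id z).sub_const x
    exact hc.clm_apply hu
  have key := intervalIntegral.hasFDerivAt_integral_of_dominated_of_fderiv_le
    (F := fun z t => ω (x + t • (z - x)) (z - x)) (F' := F') (x₀ := y)
    (a := 0) (b := 1) (μ := volume) (bound := fun _ => C) (s := Metric.ball y 1) (Metric.ball_mem_nhds y one_pos)
    ?_ ?_ ?_ ?_ ?_ ?_
  · -- rewrite the integral as ω y
    have hint : IntervalIntegrable (fun t => F' y t) volume 0 1 :=
      ((hGcont.comp (Continuous.prodMk_right y)).intervalIntegrable 0 1)
    have : (∫ t in (0:ℝ)..1, F' y t) = ω y := by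
      ext v
      rw [ContinuousLinearMap.intervalIntegral_apply hint v]
      have hder : ∀ t ∈ Set.uIcc (0:ℝ) 1,
          HasDerivAt (fun t : ℝ => t * (ω (x + t • (y - x)) v)) ((F' y t) v) t := by
        intro t _
        have hγ : HasDerivAt (fun t : ℝ => x + t • (y - x)) (y - x) t := by
          simpa using ((hasDerivAt_id t).smul_const (y - x)).const_add x
        have hB : HasDerivAt (fun t : ℝ => ω (x + t • (y - x)))
            ((fderiv ℝ ω (x + t • (y - x))) (y - x)) t :=
          ((hω.differentiable (by simp)).differentiableAt.hasFDerivAt).comp_hasDerivAt t hγ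
        have hBv : HasDerivAt (fun t : ℝ => ω (x + t • (y - x)) v)
            (((fderiv ℝ ω (x + t • (y - x))) (y - x)) v) t := by
          simpa using hB.clm_apply (hasDerivAt_const t v)
        have : HasDerivAt (fun t : ℝ => t * (ω (x + t • (y - x)) v))
            (1 * (ω (x + t • (y - x))) v + id t * ((fderiv ℝ ω (x + t • (y - x))) (y - x)) v) t :=
          (hasDerivAt_id t).mul hBv
        convert this using 1
        simp only [hF', ContinuousLinearMap.add_apply, ContinuousLinearMap.comp_apply,
          ContinuousLinearMap.flip_apply, ContinuousLinearMap.id_apply,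
          ContinuousLinearMap.smul_apply, ContinuousLinearMap.map_smul,
          ContinuousLinearMap.coe_smul', Pi.smul_apply, smul_eq_mul]
        rw [hcl (x + t • (y - x)) v (y - x)]
        simp only [id_eq]
        ring
      have hii : IntervalIntegrable (fun t => (F' y t) v) volume 0 1 :=
        (((hGcont.comp (Continuous.prodMk_right y)).clm_apply continuous_const).intervalIntegrable 0 1)
      rw [intervalIntegral.integral_eq_sub_of_hasDerivAt hder hii]
      simp
    rwa [this] at key
  · -- hF_meas
    filter_upwards with z
    exact ((hzc z).aestronglyMeasurable).restrict
  · -- hF_int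
    exact (hzc y).intervalIntegrable 0 1
  · -- hF'_meas
    exact (Continuous.aestronglyMeasurable (hGcont.comp (Continuous.prodMk_right y))).restrict
  · -- h_bound
    filter_upwards with t ht z hz
    refine hC (z, t) ?_
    refine Set.mk_mem_prod (Metric.ball_subset_closedBall hz) ?_
    exact ⟨le_of_lt (by rcases Set.mem_uIoc.1 ht with h | h <;> [exact h.1; linarith [h.1, h.2]]),
      by rcases Set.mem_uIoc.1 ht with h | h <;> [exact h.2; linarith [h.1, h.2]]⟩
  · -- bound integrable
    exact intervalIntegrable_const
  · -- h_diff
    filter_upwards with t ht z _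
    exact h_diff t z

set_option maxHeartbeats 1000000 in
/-- `𝒦` satisfies `𝒦(g ∘ h)(y) = 𝒦(g)(h y) + 𝒦(h)(y) − 𝒦(g)(h x)` for all `y`; in
particular `𝒦(g ∘ h) − 𝒦(g) ∘ h − 𝒦(h)` is a constant function, so `𝒦` is a
one-cocycle with values in functions modulo constants. -/
theorem oneCocycleK_cocycle {m : ℕ}
    (lam : EuclideanSpace ℝ (Fin m) → (EuclideanSpace ℝ (Fin m) →L[ℝ] ℝ))
    (hlam : ContDiff ℝ (⊤ : ℕ∞) lam) (x : EuclideanSpace ℝ (Fin m))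
    (g h : EuclideanSpace ℝ (Fin m) → EuclideanSpace ℝ (Fin m))
    (hg : ContDiff ℝ (⊤ : ℕ∞) g) (hh : ContDiff ℝ (⊤ : ℕ∞) h)
    (hgs : IsSymplecticFor g lam) (hhs : IsSymplecticFor h lam) :
    ∀ y : EuclideanSpace ℝ (Fin m),
      oneCocycleK x lam (g ∘ h) y
        = oneCocycleK x lam g (h y) + oneCocycleK x lam h y - oneCocycleK x lam g (h x) := by
  intro y
  have hωg : ContDiff ℝ (⊤ : ℕ∞) (fun z => oneFormPullback g lam z - lam z) := by
    refine ContDiff.sub ?_ hlam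
    exact (hlam.comp hg).clm_comp (hg.fderiv_right (by simp))
  have hfh : ContDiff ℝ (⊤ : ℕ∞) (fderiv ℝ h) := hh.fderiv_right (by simp)
  have hωh : ContDiff ℝ (⊤ : ℕ∞) (fun z => oneFormPullback h lam z - lam z) := by
    refine ContDiff.sub ?_ hlam
    exact (hlam.comp hh).clm_comp hfh
  set v := y - x with hv
  have hγ : ∀ t : ℝ, HasDerivAt (fun t : ℝ => x + t • v) v t := fun t => by
    simpa using ((hasDerivAt_id t).smul_const v).const_add x
  have hγc : Continuous (fun t : ℝ => x + t • v) := by fun_prop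
  have key : ∀ t : ℝ,
      (oneFormPullback (g ∘ h) lam (x + t • v) - lam (x + t • v)) v
        = (oneFormPullback g lam (h (x + t • v)) - lam (h (x + t • v)))
            ((fderiv ℝ h (x + t • v)) v)
          + (oneFormPullback h lam (x + t • v) - lam (x + t • v)) v := by
    intro t
    have hcomp : fderiv ℝ (g ∘ h) (x + t • v)
        = (fderiv ℝ g (h (x + t • v))).comp (fderiv ℝ h (x + t • v)) :=
      fderiv_comp (x + t • v) (hg.differentiable (by simp) (h (x + t • v)))
        (hh.differentiable (by simp) (x + t • v))
    simp only [oneFormPullback, Function.comp_apply, hcomp, ContinuousLinearMap.sub_apply,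
      ContinuousLinearMap.comp_apply]
    ring
  have hK : ∀ z, HasFDerivAt (oneCocycleK x lam g)
      (oneFormPullback g lam z - lam z) z := fun z =>
    poincare_hasFDerivAt (fun q => oneFormPullback g lam q - lam q) hωg hgs x z
  have hcontA : Continuous (fun t : ℝ =>
      (oneFormPullback g lam (h (x + t • v)) - lam (h (x + t • v)))
        ((fderiv ℝ h (x + t • v)) v)) :=
    (hωg.continuous.comp (hh.continuous.comp hγc)).clm_apply
      ((hfh.continuous.comp hγc).clm_apply continuous_const)
  have hcontB : Continuous (fun t : ℝ =>
      (oneFormPullback h lam (x + t • v) - lam (x + t • v)) v) :=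
    (hωh.continuous.comp hγc).clm_apply continuous_const
  have hFTC : (∫ t in (0:ℝ)..1,
      (oneFormPullback g lam (h (x + t • v)) - lam (h (x + t • v)))
        ((fderiv ℝ h (x + t • v)) v))
      = oneCocycleK x lam g (h y) - oneCocycleK x lam g (h x) := by
    have hder : ∀ t ∈ Set.uIcc (0:ℝ) 1,
        HasDerivAt (fun t : ℝ => oneCocycleK x lam g (h (x + t • v)))
          ((oneFormPullback g lam (h (x + t • v)) - lam (h (x + t • v)))
            ((fderiv ℝ h (x + t • v)) v)) t := by
      intro t _
      have hc : HasDerivAt (fun t : ℝ => h (x + t • v)) ((fderiv ℝ h (x + t • v)) v) t :=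
        ((hh.differentiable (by simp)).differentiableAt.hasFDerivAt).comp_hasDerivAt t (hγ t)
      exact (hK (h (x + t • v))).comp_hasDerivAt t hc
    rw [intervalIntegral.integral_eq_sub_of_hasDerivAt hder (hcontA.intervalIntegrable 0 1)]
    have e1 : x + (1 : ℝ) • v = y := by rw [one_smul, hv]; abel
    have e0 : x + (0 : ℝ) • v = x := by rw [zero_smul, add_zero]
    rw [e1, e0]
  have hsplit : oneCocycleK x lam (g ∘ h) y
      = (∫ t in (0:ℝ)..1,
          (oneFormPullback g lam (h (x + t • v)) - lam (h (x + t • v)))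
            ((fderiv ℝ h (x + t • v)) v))
        + oneCocycleK x lam h y := by
    unfold oneCocycleK
    rw [← intervalIntegral.integral_add (hcontA.intervalIntegrable 0 1)
      (hcontB.intervalIntegrable 0 1)]
    exact intervalIntegral.integral_congr fun t _ => key t
  rw [hsplit, hFTC]
  ring


end
end

section
/- Let G be a group acting on a set M, let x ∈ M, and let K : G → M → ℝ be a one-cocycle modulo constants, i.e. for all g, h ∈ G there exists c ∈ ℝ with K (g*h) y = K g (h • y) + K h y + c for all y ∈ M. Define 𝔊_x(g,h) := K g (h • x) − K g x. Then 𝔊_x satisfies the inhomogeneous two-cocycle identity: for all f, g, h ∈ G, 𝔊_x(g,h) − 𝔊_x(f*g, h) + 𝔊_x(f, g*h) − 𝔊_x(f,g) = 0. -/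
/-! Taking differences `K k y - K k z` cancels the constant in the cocycle relation, so the
differences satisfy the cocycle relation exactly. Expanding `K (f * g)` at `h • x` and at `x` this
way, the four terms of the two-cocycle identity cancel in pairs. -/

theorem sub_mul_eq_of_exists_const {G M : Type*} [Mul G] [SMul G M] {K : G → M → ℝ} {g h : G}
    (hK : ∃ c : ℝ, ∀ y : M, K (g * h) y = K g (h • y) + K h y + c) (y z : M) :
    K (g * h) y - K (g * h) z = (K g (h • y) - K g (h • z)) + (K h y - K h z) := by
  obtain ⟨c, hc⟩ := hK
  rw [hc y, hc z]
  ring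

/-- If `K : G → M → ℝ` is a one-cocycle modulo constants for an action of `G` on `M`,
then `𝔊_x(g,h) := K g (h • x) − K g x` satisfies the inhomogeneous two-cocycle identity. -/
theorem ILM_of_oneCocycle_is_two_cocycle {G M : Type*} [Group G] [MulAction G M]
    (x : M) (K : G → M → ℝ)
    (hK : ∀ g h : G, ∃ c : ℝ, ∀ y : M, K (g * h) y = K g (h • y) + K h y + c)
    (f g h : G) :
    (K g (h • x) - K g x) - (K (f * g) (h • x) - K (f * g) x)
      + (K f ((g * h) • x) - K f x) - (K f (g • x) - K f x) = 0 := by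
  rw [sub_mul_eq_of_exists_const (hK f g), mul_smul]
  ring
end

section
/- Let G be a group acting on a set M and let K : G → M → ℝ be a one-cocycle modulo constants. Then for any two basepoints x, y ∈ M the associated two-cocycles 𝔊_x and 𝔊_y differ by a coboundary: there exists b : G → ℝ (one may take b g := K g x − K g y) such that for all g, h ∈ G, 𝔊_y(g,h) − 𝔊_x(g,h) = b g + b h − b (g*h). (Hence the cohomology class of the Ismagilov–Losik–Michor cocycle does not depend on the choice of basepoint.) -/
theorem sub_apply_mul_of_cocycle_mod_const {G M : Type*} [Mul G] [SMul G M] (K : G → M → ℝ)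
    (hK : ∀ g h : G, ∃ c : ℝ, ∀ y : M, K (g * h) y = K g (h • y) + K h y + c)
    (g h : G) (x y : M) :
    K (g * h) y - K (g * h) x = (K g (h • y) - K g (h • x)) + (K h y - K h x) := by
  obtain ⟨c, hc⟩ := hK g h
  rw [hc x, hc y]
  ring

/-- For a one-cocycle modulo constants `K : G → M → ℝ`, the two-cocycles
`𝔊_x(g,h) := K g (h • x) − K g x` and `𝔊_y` associated to two basepoints `x, y ∈ M`
differ by a coboundary; hence the cohomology class of the Ismagilov–Losik–Michor
cocycle does not depend on the choice of basepoint. -/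
theorem ILM_class_independent_of_basepoint {G M : Type*} [Group G] [MulAction G M]
    (K : G → M → ℝ)
    (hK : ∀ g h : G, ∃ c : ℝ, ∀ y : M, K (g * h) y = K g (h • y) + K h y + c)
    (x y : M) :
    ∃ b : G → ℝ, ∀ g h : G,
      (K g (h • y) - K g y) - (K g (h • x) - K g x) = b g + b h - b (g * h) := by
  refine ⟨fun g => K g x - K g y, fun g h => ?_⟩
  have := sub_apply_mul_of_cocycle_mod_const K hK g h x y
  linarith
end

section
/- Let G be a group acting on a set M, let x ∈ M, let K : G → M → ℝ be a one-cocycle modulo constants, and let F : M → ℝ. Define K' g z := K g z + F (g • z) − F z (the change of K corresponding to replacing the primitive λ by λ + dF). Then K' is again a one-cocycle modulo constants, and the two-cocycles 𝔊'_x(g,h) := K' g (h • x) − K' g x and 𝔊_x(g,h) := K g (h • x) − K g x differ by a coboundary: there exists b : G → ℝ (one may take b g := F x − F (g • x)) such that 𝔊'_x(g,h) − 𝔊_x(g,h) = b g + b h − b (g*h) for all g, h ∈ G. (Hence the cohomology class of the Ismagilov–Losik–Michor cocycle does not depend on the choice of primitive.) -/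
/-! Adding `dF` to the primitive changes `K` by the coboundary `g ↦ F ∘ (g • ·) - F` of a
function on `M`; this coboundary satisfies the cocycle identity exactly, and evaluated along
the orbit of `x` it contributes to `𝔊_x` precisely the group coboundary of
`b g := F x - F (g • x)`. -/

namespace MulAction

variable {G M A : Type*} [Group G] [MulAction G M] [AddCommGroup A]

def IsOneCocycleModConst (K : G → M → A) : Prop :=
  ∀ g h : G, ∃ c : A, ∀ y : M, K (g * h) y = K g (h • y) + K h y + c

def ilmCocycle (K : G → M → A) (x : M) (g h : G) : A :=
  K g (h • x) - K g x

def addCoboundary (K : G → M → A) (F : M → A) : G → M → A :=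
  fun g z => K g z + F (g • z) - F z

theorem IsOneCocycleModConst.addCoboundary {K : G → M → A} (hK : IsOneCocycleModConst K)
    (F : M → A) : IsOneCocycleModConst (addCoboundary K F) := by
  intro g h
  obtain ⟨c, hc⟩ := hK g h
  refine ⟨c, fun y => ?_⟩
  simp only [MulAction.addCoboundary, hc y, mul_smul]
  abel

theorem ilmCocycle_addCoboundary_sub (K : G → M → A) (F : M → A) (x : M) (g h : G) :
    ilmCocycle (addCoboundary K F) x g h - ilmCocycle K x g h =
      (F x - F (g • x)) + (F x - F (h • x)) - (F x - F ((g * h) • x)) := by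
  simp only [ilmCocycle, MulAction.addCoboundary, mul_smul]
  abel

end MulAction

/-- Changing the one-cocycle `K` by `K' g z := K g z + F (g • z) − F z` (the change
corresponding to replacing the primitive `λ` by `λ + dF`) yields again a one-cocycle
modulo constants, and the associated two-cocycles `𝔊'_x` and `𝔊_x` differ by a
coboundary; hence the class of the Ismagilov–Losik–Michor cocycle does not depend
on the choice of primitive. -/
theorem ILM_class_independent_of_primitive {G M : Type*} [Group G] [MulAction G M]
    (x : M) (K : G → M → ℝ)
    (hK : ∀ g h : G, ∃ c : ℝ, ∀ y : M, K (g * h) y = K g (h • y) + K h y + c)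
    (F : M → ℝ) (K' : G → M → ℝ)
    (hK' : ∀ (g : G) (z : M), K' g z = K g z + F (g • z) - F z) :
    (∀ g h : G, ∃ c : ℝ, ∀ y : M, K' (g * h) y = K' g (h • y) + K' h y + c) ∧
      ∃ b : G → ℝ, ∀ g h : G,
        (K' g (h • x) - K' g x) - (K g (h • x) - K g x) = b g + b h - b (g * h) := by
  obtain rfl : K' = MulAction.addCoboundary K F := funext₂ hK'
  exact ⟨MulAction.IsOneCocycleModConst.addCoboundary hK F,
    fun g => F x - F (g • x), MulAction.ilmCocycle_addCoboundary_sub K F x⟩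
end

section
/- Let G be a group, c : G → G → ℝ a two-cocycle (c(g,h) − c(f*g, h) + c(f, g*h) − c(f,g) = 0 for all f, g, h), S a set of elements of G, and C ∈ ℝ a constant with |c(s,k)| ≤ C for all s ∈ S and k ∈ G. Then for every nonempty list l of elements of S and every h ∈ G, |c(l.prod, h)| ≤ 2·C·(l.length). (In particular, for a group generated by S, the function |·|_c is Lipschitz with respect to the word length: |g|_c ≤ 2·C·|g|_S.) -/
/-!
Reading the cocycle identity as `c (s * g) h = c g h + c s (g * h) - c s g`, left multiplication
by a generator `s` changes `|c g h|` by at most `2 C`. Peeling the letters of a word off from the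
left down to its last letter `s`, where `|c s h| ≤ C ≤ 2 C`, gives the bound.
-/

section Cocycle

variable {G : Type*} [Group G] {c : G → G → ℝ}

theorem cocycle_mul_left_eq (hcoc : ∀ f g h : G, c g h - c (f * g) h + c f (g * h) - c f g = 0)
    (s g h : G) : c (s * g) h = c g h + c s (g * h) - c s g := by
  linarith [hcoc s g h]

theorem abs_cocycle_mul_left_le
    (hcoc : ∀ f g h : G, c g h - c (f * g) h + c f (g * h) - c f g = 0)
    {s : G} {C : ℝ} (hs : ∀ k, |c s k| ≤ C) (g h : G) :
    |c (s * g) h| ≤ |c g h| + 2 * C := by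
  rw [cocycle_mul_left_eq hcoc]
  calc |c g h + c s (g * h) - c s g|
      ≤ |c g h + c s (g * h)| + |c s g| := abs_sub _ _
    _ ≤ |c g h| + |c s (g * h)| + |c s g| := by gcongr; exact abs_add_le _ _
    _ ≤ |c g h| + 2 * C := by linarith [hs (g * h), hs g]

theorem abs_cocycle_list_prod_mul_le
    (hcoc : ∀ f g h : G, c g h - c (f * g) h + c f (g * h) - c f g = 0)
    {S : Set G} {C : ℝ} (hC : ∀ s ∈ S, ∀ k : G, |c s k| ≤ C)
    (l : List G) (hl : ∀ s ∈ l, s ∈ S) (g h : G) :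
    |c (l.prod * g) h| ≤ |c g h| + 2 * C * l.length := by
  induction l with
  | nil => simp
  | cons s t ih =>
    have ht : ∀ x ∈ t, x ∈ S := fun x hx => hl x (List.mem_cons_of_mem s hx)
    rw [List.prod_cons, mul_assoc, List.length_cons, Nat.cast_succ]
    linarith [abs_cocycle_mul_left_le hcoc (hC s (hl s List.mem_cons_self)) (t.prod * g) h, ih ht]

end Cocycle

/-- Let `c` be a two-cocycle on `G` and `S ⊆ G` with `|c(s,k)| ≤ C` for all `s ∈ S`,
`k ∈ G`.  Then for every nonempty list `l` of elements of `S` and every `h ∈ G`,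
`|c(l.prod, h)| ≤ 2·C·(l.length)`.  In particular, for a group generated by `S`, the
function `|·|_c` is Lipschitz with respect to the word length. -/
theorem cocycle_norm_lipschitz_word_length {G : Type*} [Group G] (c : G → G → ℝ)
    (hcoc : ∀ f g h : G, c g h - c (f * g) h + c f (g * h) - c f g = 0)
    (S : Set G) (C : ℝ)
    (hC : ∀ s ∈ S, ∀ k : G, |c s k| ≤ C)
    (l : List G) (hl : ∀ s ∈ l, s ∈ S) (hne : l ≠ []) (h : G) :
    |c l.prod h| ≤ 2 * C * l.length := by
  obtain ⟨t, s, rfl⟩ := (List.eq_nil_or_concat' l).resolve_left hne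
  have hs : s ∈ S := hl s (by simp)
  have ht : ∀ x ∈ t, x ∈ S := fun x hx => hl x (List.mem_append_left _ hx)
  have hC0 : 0 ≤ C := (abs_nonneg _).trans (hC s hs 1)
  have hword := abs_cocycle_list_prod_mul_le hcoc hC t ht s h
  rw [List.prod_append, List.prod_singleton, List.length_append, List.length_singleton,
    Nat.cast_add, Nat.cast_one]
  linarith [hC s hs h]
end

section
/- Let G be a group acting on a set M, let K : G → M → ℝ be a one-cocycle modulo constants, let x ∈ M, and set 𝔊(g,h) := K g (h • x) − K g x. Let S be a set of elements of G and C > 0 a constant with |𝔊(s,k)| ≤ C for all s ∈ S and all k ∈ G. Suppose g, h ∈ G satisfy g • x = x and g • (h • x) = h • x. Then for every n ≥ 1 and every nonempty list l of elements of S with l.prod = g^n, one has (n : ℝ)·|𝔊(g,h)| ≤ 2·C·(l.length). Consequently, if 𝔊(g,h) ≠ 0 then the translation length of g with respect to S is at least |𝔊(g,h)|/(2C) > 0, i.e. the cyclic subgroup generated by g is undistorted. (This is the abstract mechanism behind Polterovich's theorem on Hamiltonian actions on symplectically hyperbolic manifolds.) -/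
/-!
The constant of the cocycle relation cancels in differences `K g y - K g z`, which are therefore
additive in `g` up to moving the points. Since `g` fixes `x` and `h • x`, this gives
`𝔊(g^n, h) = n 𝔊(g, h)`; on the other hand, along a word in `S` each letter `s` contributes
`K s (u • x) - K s (v • x)`, at most `2C` in size by comparing both terms with `K s x`.
-/

def IsCocycleModConst {G M A : Type*} [Group G] [MulAction G M] [AddCommGroup A]
    (K : G → M → A) : Prop :=
  ∀ g h : G, ∃ c : A, ∀ y : M, K (g * h) y = K g (h • y) + K h y + c

namespace IsCocycleModConst

variable {G M A : Type*} [Group G] [MulAction G M] [AddCommGroup A] {K : G → M → A}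

theorem sub_mul (hK : IsCocycleModConst K) (a b : G) (y z : M) :
    K (a * b) y - K (a * b) z = (K a (b • y) - K a (b • z)) + (K b y - K b z) := by
  obtain ⟨c, hc⟩ := hK a b
  rw [hc y, hc z]
  abel

theorem sub_one (hK : IsCocycleModConst K) (y z : M) : K 1 y - K 1 z = 0 := by
  simpa using hK.sub_mul 1 1 y z

theorem sub_pow_of_smul_eq (hK : IsCocycleModConst K) {g : G} {y z : M}
    (hy : g • y = y) (hz : g • z = z) (n : ℕ) :
    K (g ^ n) y - K (g ^ n) z = n • (K g y - K g z) := by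
  induction n with
  | zero => simpa using hK.sub_one y z
  | succ n ih =>
    rw [pow_succ, hK.sub_mul, hy, hz, ih, succ_nsmul]

theorem abs_sub_list_prod_le {K : G → M → ℝ} (hK : IsCocycleModConst K) {x : M} {S : Set G}
    {C : ℝ} (hbound : ∀ s ∈ S, ∀ k : G, |K s (k • x) - K s x| ≤ C)
    {l : List G} (hl : ∀ s ∈ l, s ∈ S) (u v : G) :
    |K l.prod (u • x) - K l.prod (v • x)| ≤ 2 * C * l.length := by
  induction l generalizing u v with
  | nil => simp [hK.sub_one]
  | cons s t ih =>
    have hs := hl s List.mem_cons_self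
    have hletter : |K s (t.prod • u • x) - K s (t.prod • v • x)| ≤ 2 * C := by
      rw [smul_smul, smul_smul]
      calc |K s ((t.prod * u) • x) - K s ((t.prod * v) • x)|
          = |(K s ((t.prod * u) • x) - K s x) - (K s ((t.prod * v) • x) - K s x)| := by
            congr 1; ring
        _ ≤ C + C := (abs_sub _ _).trans (add_le_add (hbound s hs _) (hbound s hs _))
        _ = 2 * C := by ring
    have htail := ih (fun a ha => hl a (List.mem_cons_of_mem s ha)) u v
    rw [List.prod_cons, hK.sub_mul, List.length_cons, Nat.cast_succ]
    calc _ ≤ 2 * C + 2 * C * t.length := (abs_add_le _ _).trans (add_le_add hletter htail)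
      _ = 2 * C * (t.length + 1) := by ring

end IsCocycleModConst

theorem undistorted_of_ILM_nonzero_general {G M : Type*} [Group G] [MulAction G M]
    (K : G → M → ℝ)
    (hK : ∀ g h : G, ∃ c : ℝ, ∀ y : M, K (g * h) y = K g (h • y) + K h y + c)
    (x : M) (S : Set G) (C : ℝ)
    (hbound : ∀ s ∈ S, ∀ k : G, |K s (k • x) - K s x| ≤ C)
    (g h : G) (hgx : g • x = x) (hghx : g • (h • x) = h • x)
    (n : ℕ)
    (l : List G) (hl : ∀ s ∈ l, s ∈ S) (hprod : l.prod = g ^ n) :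
    (n : ℝ) * |K g (h • x) - K g x| ≤ 2 * C * l.length := by
  have hK' : IsCocycleModConst K := hK
  have hword := hK'.abs_sub_list_prod_le hbound hl h 1
  rw [one_smul, hprod, hK'.sub_pow_of_smul_eq hghx hgx, nsmul_eq_mul, abs_mul,
    Nat.abs_cast] at hword
  exact hword

/-- The abstract mechanism behind Polterovich's theorem on Hamiltonian actions on
symplectically hyperbolic manifolds: if the Ismagilov–Losik–Michor cocycle
`𝔊(g,h) := K g (h • x) − K g x` of a one-cocycle modulo constants `K` is bounded by
`C` on a set `S` of group elements, and `g` fixes both `x` and `h • x`, then every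
word in `S` representing `g^n` has length at least `n·|𝔊(g,h)|/(2C)`; consequently,
if `𝔊(g,h) ≠ 0` then the cyclic subgroup generated by `g` is undistorted. -/
theorem undistorted_of_ILM_nonzero {G M : Type*} [Group G] [MulAction G M]
    (K : G → M → ℝ)
    (hK : ∀ g h : G, ∃ c : ℝ, ∀ y : M, K (g * h) y = K g (h • y) + K h y + c)
    (x : M) (S : Set G) (C : ℝ) (hC : 0 < C)
    (hbound : ∀ s ∈ S, ∀ k : G, |K s (k • x) - K s x| ≤ C)
    (g h : G) (hgx : g • x = x) (hghx : g • (h • x) = h • x)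
    (n : ℕ) (hn : 1 ≤ n)
    (l : List G) (hl : ∀ s ∈ l, s ∈ S) (hne : l ≠ []) (hprod : l.prod = g ^ n) :
    (n : ℝ) * |K g (h • x) - K g x| ≤ 2 * C * l.length :=
  undistorted_of_ILM_nonzero_general K hK x S C hbound g h hgx hghx n l hl hprod
end

section
/- Let λ be a smooth one-form on E := EuclideanSpace ℝ (Fin m), let x ∈ E and let e ∈ E with e ≠ 0. Let g, h : E → E be smooth maps symplectic for λ (g^*λ − λ and h^*λ − λ closed) which are compactly supported, i.e. there are compact sets outside of which g and h equal the identity. Define 𝔟(g) := ∫ t in Set.Ioi (0:ℝ), ((g^*λ − λ) (x + t • e)) e (the integral of g^*λ − λ along the ray from x in direction e; the integrand vanishes outside a bounded set of t). Then 𝔊_{x,λ}(g,h) = 𝔟(g) + 𝔟(h) − 𝔟(g ∘ h). In particular, the Ismagilov–Losik–Michor cocycle restricted to compactly supported symplectic maps is a coboundary. -/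
set_option maxHeartbeats 1000000


open MeasureTheory intervalIntegral

noncomputable section

/-- `𝔟(g)`: the integral of `g^*λ − λ` along the ray from `x` in direction `e`. -/
def rayPrimitive {m : ℕ} (x e : EuclideanSpace ℝ (Fin m))
    (lam : EuclideanSpace ℝ (Fin m) → (EuclideanSpace ℝ (Fin m) →L[ℝ] ℝ))
    (g : EuclideanSpace ℝ (Fin m) → EuclideanSpace ℝ (Fin m)) : ℝ :=
  ∫ t in Set.Ioi (0:ℝ), (oneFormPullback g lam (x + t • e) - lam (x + t • e)) e

/-- Radial primitive of a one-form with basepoint `x`. -/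
def primOf {m : ℕ} (x : EuclideanSpace ℝ (Fin m))
    (ω : EuclideanSpace ℝ (Fin m) → (EuclideanSpace ℝ (Fin m) →L[ℝ] ℝ))
    (y : EuclideanSpace ℝ (Fin m)) : ℝ :=
  ∫ t in (0:ℝ)..1, ω (x + t • (y - x)) (y - x)

variable {m : ℕ}

/-- Poincaré lemma for closed `C¹` one-forms on Euclidean space. -/
theorem primOf_hasFDerivAt {ω : EuclideanSpace ℝ (Fin m) → (EuclideanSpace ℝ (Fin m) →L[ℝ] ℝ)}
    (hω : ContDiff ℝ 1 ω) (hcl : IsClosedOneForm ω) (x y₀ : EuclideanSpace ℝ (Fin m)) :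
    HasFDerivAt (primOf x ω) (ω y₀) y₀ := by
  have hωc : Continuous ω := hω.continuous
  have hωd : Differentiable ℝ ω := hω.differentiable one_ne_zero
  have hdωc : Continuous (fderiv ℝ ω) := hω.continuous_fderiv one_ne_zero
  set c : EuclideanSpace ℝ (Fin m) → ℝ → EuclideanSpace ℝ (Fin m) :=
    fun y t => x + t • (y - x) with hc_def
  set Φ' : EuclideanSpace ℝ (Fin m) → ℝ → (EuclideanSpace ℝ (Fin m) →L[ℝ] ℝ) :=
    fun y t => t • ((fderiv ℝ ω (c y t)).flip (y - x)) + ω (c y t) with hΦ'_def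
  have hpathc : ∀ y : EuclideanSpace ℝ (Fin m), Continuous (fun t : ℝ => c y t) :=
    fun y => continuous_const.add (continuous_id.smul continuous_const)
  -- differentiability in y of the integrand, for every t
  have hdiff : ∀ (t : ℝ) (y : EuclideanSpace ℝ (Fin m)),
      HasFDerivAt (fun z => ω (c z t) (z - x)) (Φ' y t) y := by
    intro t y
    have hu : HasFDerivAt (fun z : EuclideanSpace ℝ (Fin m) => z - x)
        (ContinuousLinearMap.id ℝ (EuclideanSpace ℝ (Fin m))) y :=
      (hasFDerivAt_id y).sub_const x
    have hcy : HasFDerivAt (fun z => c z t)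
        (t • ContinuousLinearMap.id ℝ (EuclideanSpace ℝ (Fin m))) y :=
      (hu.const_smul t).const_add x
    have hB : HasFDerivAt (fun z => ω (c z t))
        ((fderiv ℝ ω (c y t)).comp (t • ContinuousLinearMap.id ℝ (EuclideanSpace ℝ (Fin m)))) y :=
      (hωd (c y t)).hasFDerivAt.comp y hcy
    have h := hB.clm_apply hu
    refine h.congr_fderiv ?_
    ext v
    simp [Φ', ContinuousLinearMap.flip_apply]
    ring
  -- bounds
  set R : ℝ := ‖y₀ - x‖ + 1 with hR_def
  have hR0 : (0:ℝ) ≤ R := by positivity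
  obtain ⟨M₁, hM₁⟩ := (isCompact_closedBall x R).exists_bound_of_continuousOn
    (f := fderiv ℝ ω) (hdωc.continuousOn (s := Metric.closedBall x R))
  obtain ⟨M₂, hM₂⟩ := (isCompact_closedBall x R).exists_bound_of_continuousOn
    (hωc.continuousOn (s := Metric.closedBall x R))
  have hM₁0 : 0 ≤ M₁ := le_trans (norm_nonneg _) (hM₁ x (Metric.mem_closedBall_self hR0))
  have hmemc : ∀ (t : ℝ), t ∈ Set.Ioc (0:ℝ) 1 → ∀ y ∈ Metric.ball y₀ 1,
      c y t ∈ Metric.closedBall x R := by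
    intro t ht y hy
    have hyx : ‖y - x‖ ≤ R := by
      have h1 : ‖y - y₀‖ < 1 := by
        simpa [dist_eq_norm] using hy
      calc ‖y - x‖ = ‖(y - y₀) + (y₀ - x)‖ := by abel_nf
        _ ≤ ‖y - y₀‖ + ‖y₀ - x‖ := norm_add_le _ _
        _ ≤ R := by rw [hR_def]; linarith
    have : ‖c y t - x‖ = |t| * ‖y - x‖ := by
      simp [c, norm_smul, abs_of_pos ht.1]
    simp only [Metric.mem_closedBall, dist_eq_norm]
    rw [this]
    calc |t| * ‖y - x‖ ≤ 1 * R := by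
          apply mul_le_mul _ hyx (norm_nonneg _) zero_le_one
          rw [abs_of_pos ht.1]; exact ht.2
      _ = R := one_mul R
  have key : HasFDerivAt (fun y => ∫ t in (0:ℝ)..1, ω (c y t) (y - x))
      (∫ t in (0:ℝ)..1, Φ' y₀ t) y₀ := by
    apply hasFDerivAt_integral_of_dominated_of_fderiv_le''
      (F' := Φ') (bound := fun _ => M₁ * R + M₂) (s := Metric.ball y₀ 1) (Metric.ball_mem_nhds y₀ one_pos)
    · filter_upwards with y
      exact (((ContinuousLinearMap.apply ℝ ℝ (y - x)).continuous.comp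
        (hωc.comp (hpathc y)))).aestronglyMeasurable
    · exact (((ContinuousLinearMap.apply ℝ ℝ (y₀ - x)).continuous.comp
        (hωc.comp (hpathc y₀)))).intervalIntegrable _ _
    · apply Continuous.aestronglyMeasurable
      have hflip : Continuous fun (A : EuclideanSpace ℝ (Fin m) →L[ℝ] (EuclideanSpace ℝ (Fin m) →L[ℝ] ℝ)) => A.flip :=
        (ContinuousLinearMap.flipₗᵢ ℝ (EuclideanSpace ℝ (Fin m)) (EuclideanSpace ℝ (Fin m)) ℝ).continuous
      exact (continuous_id.smul ((hflip.comp (hdωc.comp (hpathc y₀))).clm_apply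
        continuous_const)).add (hωc.comp (hpathc y₀))
    · -- bound
      rw [Set.uIoc_of_le (zero_le_one' ℝ)]
      filter_upwards [ae_restrict_mem measurableSet_Ioc] with t ht y hy
      have hmem := hmemc t ht y hy
      have hb1 : ‖fderiv ℝ ω (c y t)‖ ≤ M₁ := hM₁ _ hmem
      have hb2 : ‖ω (c y t)‖ ≤ M₂ := hM₂ _ hmem
      have hyx : ‖y - x‖ ≤ R := by
        have h1 : ‖y - y₀‖ < 1 := by simpa [dist_eq_norm] using hy
        calc ‖y - x‖ = ‖(y - y₀) + (y₀ - x)‖ := by abel_nf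
          _ ≤ ‖y - y₀‖ + ‖y₀ - x‖ := norm_add_le _ _
          _ ≤ R := by rw [hR_def]; linarith
      calc ‖Φ' y t‖ ≤ ‖t • ((fderiv ℝ ω (c y t)).flip (y - x))‖ + ‖ω (c y t)‖ := norm_add_le _ _
        _ ≤ |t| * (‖(fderiv ℝ ω (c y t)).flip‖ * ‖y - x‖) + M₂ := by
            rw [norm_smul, Real.norm_eq_abs]
            gcongr
            exact ContinuousLinearMap.le_opNorm _ _
        _ ≤ 1 * (M₁ * R) + M₂ := by
            rw [ContinuousLinearMap.opNorm_flip]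
            have ht1 : |t| ≤ 1 := by rw [abs_of_pos ht.1]; exact ht.2
            gcongr <;> first | assumption | positivity
        _ = M₁ * R + M₂ := by ring
    · exact intervalIntegrable_const
    · filter_upwards with t y _
      exact hdiff t y
  -- identify the derivative
  have hΦ'c : Continuous (Φ' y₀) := by
    have hflip : Continuous fun (A : EuclideanSpace ℝ (Fin m) →L[ℝ] (EuclideanSpace ℝ (Fin m) →L[ℝ] ℝ)) => A.flip :=
      (ContinuousLinearMap.flipₗᵢ ℝ (EuclideanSpace ℝ (Fin m)) (EuclideanSpace ℝ (Fin m)) ℝ).continuous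
    exact (continuous_id.smul ((hflip.comp (hdωc.comp (hpathc y₀))).clm_apply
      continuous_const)).add (hωc.comp (hpathc y₀))
  have hval : (∫ t in (0:ℝ)..1, Φ' y₀ t) = ω y₀ := by
    ext v
    have happ : (∫ t in (0:ℝ)..1, Φ' y₀ t) v = ∫ t in (0:ℝ)..1, Φ' y₀ t v := by
      rw [intervalIntegral.integral_of_le (zero_le_one' ℝ),
        intervalIntegral.integral_of_le (zero_le_one' ℝ)]
      exact ContinuousLinearMap.integral_apply (hΦ'c.integrableOn_Ioc) v
    rw [happ]
    -- FTC for t ↦ t * ω(c y₀ t) v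
    have hpath : ∀ t : ℝ, HasDerivAt (fun s : ℝ => c y₀ s) (y₀ - x) t := by
      intro t
      simpa [c] using ((hasDerivAt_id t).smul_const (y₀ - x)).const_add x
    have hψ : ∀ t : ℝ, HasDerivAt (fun s => ω (c y₀ s) v)
        ((fderiv ℝ ω (c y₀ t)) (y₀ - x) v) t := by
      intro t
      have hA : HasDerivAt (fun s => ω (c y₀ s)) ((fderiv ℝ ω (c y₀ t)) (y₀ - x)) t :=
        (hωd (c y₀ t)).hasFDerivAt.comp_hasDerivAt t (hpath t)
      exact ((ContinuousLinearMap.apply ℝ ℝ v).hasFDerivAt.comp_hasDerivAt t hA : _)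
    have hφ : ∀ t : ℝ, HasDerivAt (fun s => s * (ω (c y₀ s) v))
        (ω (c y₀ t) v + t * ((fderiv ℝ ω (c y₀ t)) (y₀ - x) v)) t := by
      intro t
      have := (hasDerivAt_id t).mul (hψ t)
      simpa [Pi.mul_def] using this
    have hint : ∫ t in (0:ℝ)..1, (ω (c y₀ t) v + t * ((fderiv ℝ ω (c y₀ t)) (y₀ - x) v))
        = 1 * (ω (c y₀ 1) v) - 0 * (ω (c y₀ 0) v) := by
      apply intervalIntegral.integral_eq_sub_of_hasDerivAt (fun t _ => hφ t)
      apply Continuous.intervalIntegrable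
      have h1 : Continuous fun t => ω (c y₀ t) v :=
        (ContinuousLinearMap.apply ℝ ℝ v).continuous.comp (hωc.comp (hpathc y₀))
      have h2 : Continuous fun t => (fderiv ℝ ω (c y₀ t)) (y₀ - x) v :=
        (ContinuousLinearMap.apply ℝ ℝ v).continuous.comp
          (((hdωc.comp (hpathc y₀)).clm_apply continuous_const))
      exact h1.add (continuous_id.mul h2)
    have hcong : (∫ t in (0:ℝ)..1, Φ' y₀ t v)
        = ∫ t in (0:ℝ)..1, (ω (c y₀ t) v + t * ((fderiv ℝ ω (c y₀ t)) (y₀ - x) v)) := by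
      apply intervalIntegral.integral_congr
      intro t _
      simp only [Φ', ContinuousLinearMap.add_apply, ContinuousLinearMap.smul_apply,
        ContinuousLinearMap.flip_apply, smul_eq_mul]
      rw [hcl (c y₀ t) v (y₀ - x)]
      ring
    rw [hcong, hint]
    have hc1 : c y₀ 1 = y₀ := by simp [c]
    have hc0 : c y₀ 0 = x := by simp [c]
    rw [hc1, hc0]
    ring
  rw [hval] at key
  exact key

/-- FTC along the straight path `t ↦ a + t • u`. -/
theorem integral_along_line {ω : EuclideanSpace ℝ (Fin m) → (EuclideanSpace ℝ (Fin m) →L[ℝ] ℝ)}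
    {F : EuclideanSpace ℝ (Fin m) → ℝ} (hF : ∀ y, HasFDerivAt F (ω y) y)
    (hω : Continuous ω) (a u : EuclideanSpace ℝ (Fin m)) (T : ℝ) :
    ∫ t in (0:ℝ)..T, ω (a + t • u) u = F (a + T • u) - F a := by
  have hderiv : ∀ t ∈ Set.uIcc (0:ℝ) T,
      HasDerivAt (fun s : ℝ => F (a + s • u)) (ω (a + t • u) u) t := by
    intro t _
    have hpath : HasDerivAt (fun s : ℝ => a + s • u) u t := by
      simpa using ((hasDerivAt_id t).smul_const u).const_add a
    exact (hF (a + t • u)).comp_hasDerivAt t hpath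
  have hcont : Continuous fun t : ℝ => ω (a + t • u) u :=
    (ContinuousLinearMap.apply ℝ ℝ u).continuous.comp
      (hω.comp (continuous_const.add (continuous_id.smul continuous_const)))
  have := intervalIntegral.integral_eq_sub_of_hasDerivAt hderiv
    (hcont.intervalIntegrable _ _)
  simpa using this

/-- Truncation of an integral over `Ioi 0` to `(0, T]` when the integrand vanishes beyond `T`. -/
theorem integral_Ioi_eq_intervalIntegral {f : ℝ → ℝ} (hf : Continuous f) {T : ℝ} (hT : 0 < T)
    (hz : ∀ t, T < t → f t = 0) :
    ∫ t in Set.Ioi (0:ℝ), f t = ∫ t in (0:ℝ)..T, f t := by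
  have heq0 : Set.EqOn f 0 (Set.Ioi T) := fun t ht => hz t ht
  have hIoc : IntegrableOn f (Set.Ioc 0 T) := hf.integrableOn_Ioc
  have hIoi : IntegrableOn f (Set.Ioi T) :=
    (integrableOn_congr_fun heq0 measurableSet_Ioi).mpr (integrableOn_zero)
  rw [intervalIntegral.integral_of_le hT.le]
  rw [← Set.Ioc_union_Ioi_eq_Ioi hT.le,
    setIntegral_union (Set.Ioc_disjoint_Ioi le_rfl) measurableSet_Ioi hIoc hIoi]
  have : ∫ t in Set.Ioi T, f t = 0 := by
    rw [setIntegral_congr_fun measurableSet_Ioi heq0]; simp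
  rw [this, add_zero]

/-- `g^*λ − λ` is `C¹` when `g` and `λ` are smooth. -/
theorem oneFormDiff_contDiff {lam : EuclideanSpace ℝ (Fin m) → (EuclideanSpace ℝ (Fin m) →L[ℝ] ℝ)}
    (hlam : ContDiff ℝ (⊤ : ℕ∞) lam) {g : EuclideanSpace ℝ (Fin m) → EuclideanSpace ℝ (Fin m)}
    (hg : ContDiff ℝ (⊤ : ℕ∞) g) :
    ContDiff ℝ 1 (fun y => oneFormPullback g lam y - lam y) := by
  refine ContDiff.sub ?_ (hlam.of_le (by simp))
  exact ContDiff.clm_comp ((hlam.of_le (by simp)).comp (hg.of_le (by simp))) (hg.fderiv_right (by exact WithTop.coe_le_coe.mpr le_top))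

/-- `g^*λ − λ` vanishes outside any closed set off which `g` is the identity. -/
theorem oneFormDiff_vanish {lam : EuclideanSpace ℝ (Fin m) → (EuclideanSpace ℝ (Fin m) →L[ℝ] ℝ)}
    {g : EuclideanSpace ℝ (Fin m) → EuclideanSpace ℝ (Fin m)}
    {K : Set (EuclideanSpace ℝ (Fin m))} (hK : IsClosed K) (hg : ∀ y ∉ K, g y = y)
    {p : EuclideanSpace ℝ (Fin m)} (hp : p ∉ K) :
    oneFormPullback g lam p - lam p = 0 := by
  have hopen : Kᶜ ∈ nhds p := hK.isOpen_compl.mem_nhds hp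
  have heq : g =ᶠ[nhds p] id := Filter.eventuallyEq_of_mem hopen (fun z hz => hg z hz)
  have hfd : fderiv ℝ g p = ContinuousLinearMap.id ℝ (EuclideanSpace ℝ (Fin m)) := by
    rw [heq.fderiv_eq, fderiv_id]
  ext v
  simp [oneFormPullback, hfd, hg p hp]

/-- For compactly supported symplectic maps `g, h`, the Ismagilov–Losik–Michor cocycle
is the coboundary of `𝔟`: `𝔊_{x,λ}(g,h) = 𝔟(g) + 𝔟(h) − 𝔟(g ∘ h)`.  In particular,
the cocycle restricted to compactly supported symplectic maps is a coboundary. -/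
theorem ILM_coboundary_on_compactly_supported {m : ℕ}
    (lam : EuclideanSpace ℝ (Fin m) → (EuclideanSpace ℝ (Fin m) →L[ℝ] ℝ))
    (hlam : ContDiff ℝ (⊤ : ℕ∞) lam)
    (x e : EuclideanSpace ℝ (Fin m)) (he : e ≠ 0)
    (g h : EuclideanSpace ℝ (Fin m) → EuclideanSpace ℝ (Fin m))
    (hg : ContDiff ℝ (⊤ : ℕ∞) g) (hh : ContDiff ℝ (⊤ : ℕ∞) h)
    (hgs : IsSymplecticFor g lam) (hhs : IsSymplecticFor h lam)
    (hgc : ∃ Kg : Set (EuclideanSpace ℝ (Fin m)), IsCompact Kg ∧ ∀ y ∉ Kg, g y = y)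
    (hhc : ∃ Kh : Set (EuclideanSpace ℝ (Fin m)), IsCompact Kh ∧ ∀ y ∉ Kh, h y = y) :
    ILM x lam g h
      = rayPrimitive x e lam g + rayPrimitive x e lam h - rayPrimitive x e lam (g ∘ h) := by
  obtain ⟨Kg, hKgc, hKg⟩ := hgc
  obtain ⟨Kh, hKhc, hKh⟩ := hhc
  set ωg := fun y => oneFormPullback g lam y - lam y with hωg_def
  set ωh := fun y => oneFormPullback h lam y - lam y with hωh_def
  set ωgh := fun y => oneFormPullback (g ∘ h) lam y - lam y with hωgh_def
  have hgd : Differentiable ℝ g := hg.differentiable (by simp)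
  have hhd : Differentiable ℝ h := hh.differentiable (by simp)
  have hωg1 : ContDiff ℝ 1 ωg := oneFormDiff_contDiff hlam hg
  have hωh1 : ContDiff ℝ 1 ωh := oneFormDiff_contDiff hlam hh
  have hωgh1 : ContDiff ℝ 1 ωgh := oneFormDiff_contDiff hlam (hg.comp hh)
  -- primitives
  set Fg := primOf x ωg with hFg_def
  set Fh := primOf x ωh with hFh_def
  have hFg : ∀ y, HasFDerivAt Fg (ωg y) y := fun y => primOf_hasFDerivAt hωg1 hgs x y
  have hFh : ∀ y, HasFDerivAt Fh (ωh y) y := fun y => primOf_hasFDerivAt hωh1 hhs x y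
  -- primitive for the composition
  have hdecomp : ∀ y, ωgh y = (ωg (h y)).comp (fderiv ℝ h y) + ωh y := by
    intro y
    have hchain : fderiv ℝ (g ∘ h) y = (fderiv ℝ g (h y)).comp (fderiv ℝ h y) :=
      fderiv_comp y (hgd (h y)) (hhd y)
    ext v
    simp [ωgh, ωg, ωh, oneFormPullback, hchain, Function.comp]
  have hFgh : ∀ y, HasFDerivAt (fun z => Fg (h z) + Fh z) (ωgh y) y := by
    intro y
    have h1 : HasFDerivAt (fun z => Fg (h z)) ((ωg (h y)).comp (fderiv ℝ h y)) y :=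
      (hFg (h y)).comp y (hhd y).hasFDerivAt
    have := h1.add (hFh y)
    rwa [← hdecomp y] at this
  -- geometry: beyond T the ray escapes Kg ∪ Kh
  obtain ⟨ρ, hρ⟩ := (hKgc.union hKhc).isBounded.subset_closedBall 0
  set ρ' := max ρ 0 with hρ'_def
  have hsub : Kg ∪ Kh ⊆ Metric.closedBall 0 ρ' :=
    hρ.trans (Metric.closedBall_subset_closedBall (le_max_left _ _))
  have hepos : (0:ℝ) < ‖e‖ := norm_pos_iff.mpr he
  set T := (ρ' + ‖x‖ + 1) / ‖e‖ with hT_def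
  have hρ'0 : (0:ℝ) ≤ ρ' := le_max_right _ _
  have hT0 : 0 < T := by
    apply div_pos _ hepos
    positivity
  have hout : ∀ t : ℝ, T ≤ t → x + t • e ∉ Kg ∪ Kh := by
    intro t ht hmem
    have h1 : ‖x + t • e‖ ≤ ρ' := by
      simpa [dist_zero_right] using hsub hmem
    have ht0 : (0:ℝ) < t := lt_of_lt_of_le hT0 ht
    have h2 : t * ‖e‖ ≤ ‖x + t • e‖ + ‖x‖ := by
      have : ‖t • e‖ = ‖(x + t • e) - x‖ := by congr 1; abel
      have h3 : ‖(x + t • e) - x‖ ≤ ‖x + t • e‖ + ‖x‖ := norm_sub_le _ _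
      rw [← this] at h3
      rwa [norm_smul, Real.norm_eq_abs, abs_of_pos ht0] at h3
    have h3 : ρ' + ‖x‖ + 1 ≤ t * ‖e‖ := by
      have := mul_le_mul_of_nonneg_right ht hepos.le
      rwa [hT_def, div_mul_cancel₀ _ hepos.ne'] at this
    linarith
  have hTe_not_g : x + T • e ∉ Kg := fun hmem => hout T le_rfl (Or.inl hmem)
  have hTe_not_h : x + T • e ∉ Kh := fun hmem => hout T le_rfl (Or.inr hmem)
  have hhTe : h (x + T • e) = x + T • e := hKh _ hTe_not_h
  -- ray integrals
  have hrayg : rayPrimitive x e lam g = Fg (x + T • e) - Fg x := by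
    have hz : ∀ t, T < t → ωg (x + t • e) = 0 := fun t ht =>
      oneFormDiff_vanish hKgc.isClosed hKg (fun hmem => hout t ht.le (Or.inl hmem))
    have hcont : Continuous fun t : ℝ => ωg (x + t • e) e :=
      (ContinuousLinearMap.apply ℝ ℝ e).continuous.comp
        (hωg1.continuous.comp (continuous_const.add (continuous_id.smul continuous_const)))
    have h1 : rayPrimitive x e lam g = ∫ t in (0:ℝ)..T, ωg (x + t • e) e :=
      integral_Ioi_eq_intervalIntegral hcont hT0 (fun t ht => by rw [hz t ht]; simp)
    rw [h1, integral_along_line hFg hωg1.continuous x e T]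
  have hrayh : rayPrimitive x e lam h = Fh (x + T • e) - Fh x := by
    have hz : ∀ t, T < t → ωh (x + t • e) = 0 := fun t ht =>
      oneFormDiff_vanish hKhc.isClosed hKh (fun hmem => hout t ht.le (Or.inr hmem))
    have hcont : Continuous fun t : ℝ => ωh (x + t • e) e :=
      (ContinuousLinearMap.apply ℝ ℝ e).continuous.comp
        (hωh1.continuous.comp (continuous_const.add (continuous_id.smul continuous_const)))
    have h1 : rayPrimitive x e lam h = ∫ t in (0:ℝ)..T, ωh (x + t • e) e :=
      integral_Ioi_eq_intervalIntegral hcont hT0 (fun t ht => by rw [hz t ht]; simp)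
    rw [h1, integral_along_line hFh hωh1.continuous x e T]
  have hraygh : rayPrimitive x e lam (g ∘ h)
      = (Fg (h (x + T • e)) + Fh (x + T • e)) - (Fg (h x) + Fh x) := by
    have hghid : ∀ y ∉ Kg ∪ Kh, (g ∘ h) y = y := by
      intro y hy
      simp only [Function.comp_apply]
      rw [hKh y (fun hmem => hy (Or.inr hmem)), hKg y (fun hmem => hy (Or.inl hmem))]
    have hz : ∀ t, T < t → ωgh (x + t • e) = 0 := fun t ht =>
      oneFormDiff_vanish (hKgc.union hKhc).isClosed hghid (fun hmem => hout t ht.le hmem)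
    have hcont : Continuous fun t : ℝ => ωgh (x + t • e) e :=
      (ContinuousLinearMap.apply ℝ ℝ e).continuous.comp
        (hωgh1.continuous.comp (continuous_const.add (continuous_id.smul continuous_const)))
    have h1 : rayPrimitive x e lam (g ∘ h) = ∫ t in (0:ℝ)..T, ωgh (x + t • e) e :=
      integral_Ioi_eq_intervalIntegral hcont hT0 (fun t ht => by rw [hz t ht]; simp)
    rw [h1, integral_along_line hFgh hωgh1.continuous x e T]
  -- the cocycle
  have hilm : ILM x lam g h = Fg (h x) - Fg x := by
    have h1 : ILM x lam g h = ∫ t in (0:ℝ)..1, ωg (x + t • (h x - x)) (h x - x) := rfl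
    rw [h1, integral_along_line hFg hωg1.continuous x (h x - x) 1]
    simp
  rw [hilm, hrayg, hrayh, hraygh, hhTe]
  ring


end
end

section
/- Let λ be a smooth one-form on E := EuclideanSpace ℝ (Fin m), let x ∈ E, and let g, h : E → E be smooth maps symplectic for λ (g^*λ − λ and h^*λ − λ closed). Suppose there is a C¹ path γ : ℝ → E with γ 0 = x and γ 1 = h x such that for all t ∈ [0,1] both λ (γ t) (deriv γ t) = 0 and λ (g (γ t)) (deriv (g ∘ γ) t) = 0 (this holds when γ lies in a subset L invariant under g on which λ pulls back to zero, e.g. an exact isotropic submanifold with a suitable primitive). Then 𝔊_{x,λ}(g,h) = 0. -/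
open MeasureTheory intervalIntegral

noncomputable section

set_option maxHeartbeats 1000000 in
lemma closed_primitive {m : ℕ} (ω : EuclideanSpace ℝ (Fin m) → (EuclideanSpace ℝ (Fin m) →L[ℝ] ℝ)) (hω : ContDiff ℝ (⊤ : ℕ∞) ω)
    (hcl : IsClosedOneForm ω) (x : EuclideanSpace ℝ (Fin m)) :
    ∃ f : EuclideanSpace ℝ (Fin m) → ℝ, ∀ y, HasFDerivAt f (ω y) y := by
  classical
  have hωd : Differentiable ℝ ω := hω.differentiable (by simp)
  have hωc : Continuous ω := hω.continuous
  have hω' : ContDiff ℝ (⊤ : ℕ∞) (fderiv ℝ ω) := (hω.fderiv_right (by simp) : _)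
  have hω'c : Continuous (fderiv ℝ ω) := hω'.continuous
  refine ⟨fun z => ∫ t in (0:ℝ)..1, ω (x + t • (z - x)) (z - x), fun y => ?_⟩
  set F2 : EuclideanSpace ℝ (Fin m) → ℝ → (EuclideanSpace ℝ (Fin m) →L[ℝ] ℝ) := fun z t =>
      ω (x + t • (z - x)) +
        t • ((ContinuousLinearMap.apply ℝ ℝ (z - x)).comp (fderiv ℝ ω (x + t • (z - x))))
    with hF2
  set c : ℝ → EuclideanSpace ℝ (Fin m) := fun t => x + t • (y - x) with hc
  have hcont_c : Continuous c := by fun_prop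
  have hF'cont : Continuous (F2 y) := by rw [hF2]; fun_prop
  -- differentiability in the parameter z
  have hdiff : ∀ (t : ℝ) (z : EuclideanSpace ℝ (Fin m)),
      HasFDerivAt (fun z => ω (x + t • (z - x)) (z - x)) (F2 z t) z := by
    intro t z
    have h1 : HasFDerivAt (fun z : EuclideanSpace ℝ (Fin m) => x + t • (z - x))
        (t • ContinuousLinearMap.id ℝ (EuclideanSpace ℝ (Fin m))) z :=
      ((((hasFDerivAt_id z).sub_const x).const_smul t).const_add x)
    have h2 : HasFDerivAt (fun z : EuclideanSpace ℝ (Fin m) => ω (x + t • (z - x)))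
        ((fderiv ℝ ω (x + t • (z - x))).comp (t • ContinuousLinearMap.id ℝ (EuclideanSpace ℝ (Fin m)))) z :=
      (hωd (x + t • (z - x))).hasFDerivAt.comp z h1
    have h3 : HasFDerivAt (fun z : EuclideanSpace ℝ (Fin m) => z - x) (ContinuousLinearMap.id ℝ (EuclideanSpace ℝ (Fin m))) z :=
      (hasFDerivAt_id z).sub_const x
    have h4 := h2.clm_apply h3
    refine h4.congr_fderiv ?_
    ext u
    simp [hF2, mul_comm]
  -- uniform bound on a ball of radius 1
  obtain ⟨C₁, hC₁⟩ := (isCompact_closedBall x (‖y - x‖ + 1)).exists_bound_of_continuousOn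
    hωc.continuousOn
  obtain ⟨C₂, hC₂⟩ := (isCompact_closedBall x (‖y - x‖ + 1)).exists_bound_of_continuousOn
    (f := fderiv ℝ ω) (by exact hω'c.continuousOn)
  set R := ‖y - x‖ + 1 with hR
  have hRpos : 0 ≤ R := by positivity
  have key : HasFDerivAt (fun z => ∫ t in (0:ℝ)..1, ω (x + t • (z - x)) (z - x))
      (∫ t in (0:ℝ)..1, F2 y t) y := by
    apply intervalIntegral.hasFDerivAt_integral_of_dominated_of_fderiv_le
      (F := fun z t => ω (x + t • (z - x)) (z - x)) (F' := F2)
      (bound := fun _ => (max C₁ 0) + (max C₂ 0) * R) (Metric.ball_mem_nhds y one_pos)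
    · filter_upwards with z
      exact (Continuous.aestronglyMeasurable (by fun_prop)).restrict
    · exact (Continuous.intervalIntegrable (by fun_prop) _ _)
    · exact hF'cont.aestronglyMeasurable.restrict
    · filter_upwards with t ht z hz
      have ht' : t ∈ Set.Ioc (0:ℝ) 1 := by
        rwa [Set.uIoc_of_le (zero_le_one (α := ℝ))] at ht
      have htabs : |t| ≤ 1 := by rw [abs_of_pos ht'.1]; exact ht'.2
      have hzx : ‖z - x‖ ≤ R := by
        have : ‖z - x‖ ≤ ‖z - y‖ + ‖y - x‖ := norm_sub_le_norm_sub_add_norm_sub z y x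
        have h2 : ‖z - y‖ < 1 := by rwa [Metric.mem_ball, dist_eq_norm] at hz
        rw [hR]; linarith
      have hp : x + t • (z - x) ∈ Metric.closedBall x R := by
        rw [Metric.mem_closedBall, dist_eq_norm]
        have : ‖x + t • (z - x) - x‖ = |t| * ‖z - x‖ := by
          rw [add_sub_cancel_left, norm_smul, Real.norm_eq_abs]
        rw [this]
        calc |t| * ‖z - x‖ ≤ 1 * ‖z - x‖ := by
              apply mul_le_mul_of_nonneg_right htabs (norm_nonneg _)
          _ ≤ R := by rw [one_mul]; exact hzx
      apply ContinuousLinearMap.opNorm_le_bound _ (by positivity)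
      intro u
      have e1 : ‖ω (x + t • (z - x)) u‖ ≤ max C₁ 0 * ‖u‖ :=
        le_trans (ContinuousLinearMap.le_opNorm _ _)
          (mul_le_mul_of_nonneg_right ((hC₁ _ hp).trans (le_max_left _ _)) (norm_nonneg _))
      have e2 : ‖(fderiv ℝ ω (x + t • (z - x))) u (z - x)‖ ≤ max C₂ 0 * ‖u‖ * R := by
        calc ‖(fderiv ℝ ω (x + t • (z - x))) u (z - x)‖
            ≤ ‖(fderiv ℝ ω (x + t • (z - x))) u‖ * ‖z - x‖ :=
              ContinuousLinearMap.le_opNorm _ _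
          _ ≤ (‖fderiv ℝ ω (x + t • (z - x))‖ * ‖u‖) * R := by
              apply mul_le_mul (ContinuousLinearMap.le_opNorm _ _) hzx (norm_nonneg _)
              positivity
          _ ≤ (max C₂ 0 * ‖u‖) * R := by
              apply mul_le_mul_of_nonneg_right _ hRpos
              exact mul_le_mul_of_nonneg_right ((hC₂ _ hp).trans (le_max_left _ _))
                (norm_nonneg _)
      calc ‖(F2 z t) u‖ = ‖ω (x + t • (z - x)) u +
              t * ((fderiv ℝ ω (x + t • (z - x))) u (z - x))‖ := by
            simp [hF2, mul_comm]
        _ ≤ ‖ω (x + t • (z - x)) u‖ + ‖t * ((fderiv ℝ ω (x + t • (z - x))) u (z - x))‖ :=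
            norm_add_le _ _
        _ ≤ max C₁ 0 * ‖u‖ + 1 * (max C₂ 0 * ‖u‖ * R) := by
            apply add_le_add e1
            rw [norm_mul, Real.norm_eq_abs]
            exact mul_le_mul htabs e2 (norm_nonneg _) zero_le_one
        _ = (max C₁ 0 + max C₂ 0 * R) * ‖u‖ := by ring
    · exact intervalIntegrable_const
    · filter_upwards with t ht z hz
      exact hdiff t z
  -- identify the derivative with ω y
  have hint : IntervalIntegrable (F2 y) volume 0 1 := hF'cont.intervalIntegrable _ _
  have hval : (∫ t in (0:ℝ)..1, F2 y t) = ω y := by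
    ext u
    rw [ContinuousLinearMap.intervalIntegral_apply hint]
    have hc' : ∀ t : ℝ, HasDerivAt c (y - x) t := by
      intro t
      have : HasDerivAt (fun t : ℝ => t • (y - x)) ((1:ℝ) • (y - x)) t :=
        (hasDerivAt_id t).smul_const (y - x)
      simpa [hc] using this.const_add x
    have hφ : ∀ t : ℝ, HasDerivAt (fun t => t * (ω (c t) u))
        (ω (c t) u + t * ((fderiv ℝ ω (c t)) (y - x)) u) t := by
      intro t
      have hA : HasDerivAt (fun t => ω (c t)) (fderiv ℝ ω (c t) (y - x)) t :=
        (hωd (c t)).hasFDerivAt.comp_hasDerivAt t (hc' t)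
      have hψ : HasDerivAt (fun t => ω (c t) u) ((fderiv ℝ ω (c t) (y - x)) u) t := by
        have := (ContinuousLinearMap.apply ℝ ℝ u).hasFDerivAt.comp_hasDerivAt t hA
        exact this
      exact ((hasDerivAt_id' t).mul hψ).congr_deriv (by simp)
    have heq : ∀ t : ℝ, (F2 y t) u = ω (c t) u + t * ((fderiv ℝ ω (c t)) u) (y - x) := by
      intro t
      simp [hF2, hc]
    calc (∫ t in (0:ℝ)..1, (F2 y t) u)
        = ∫ t in (0:ℝ)..1, (ω (c t) u + t * ((fderiv ℝ ω (c t)) (y - x)) u) := by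
          apply intervalIntegral.integral_congr
          intro t _
          show (F2 y t) u = ω (c t) u + t * ((fderiv ℝ ω (c t)) (y - x)) u
          rw [heq t, hcl (c t) u (y - x)]
      _ = (fun t => t * (ω (c t) u)) 1 - (fun t => t * (ω (c t) u)) 0 :=
          intervalIntegral.integral_eq_sub_of_hasDerivAt (fun t _ => hφ t)
            (Continuous.intervalIntegrable (by fun_prop) _ _)
      _ = ω y u := by simp [hc]
  rwa [hval] at key


/-- If there is a `C¹` path `γ` from `x` to `h x` along which both `λ` and its pullback
by `g` vanish (as holds when `γ` lies in a `g`-invariant subset on which `λ` pulls back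
to zero, e.g. an exact isotropic submanifold with a suitable primitive), then
`𝔊_{x,λ}(g,h) = 0`. -/
theorem ILM_vanishes_on_isotropic {m : ℕ}
    (lam : EuclideanSpace ℝ (Fin m) → (EuclideanSpace ℝ (Fin m) →L[ℝ] ℝ))
    (hlam : ContDiff ℝ (⊤ : ℕ∞) lam) (x : EuclideanSpace ℝ (Fin m))
    (g h : EuclideanSpace ℝ (Fin m) → EuclideanSpace ℝ (Fin m))
    (hg : ContDiff ℝ (⊤ : ℕ∞) g) (hh : ContDiff ℝ (⊤ : ℕ∞) h)
    (hgs : IsSymplecticFor g lam) (hhs : IsSymplecticFor h lam)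
    (γ : ℝ → EuclideanSpace ℝ (Fin m)) (hγ : ContDiff ℝ 1 γ)
    (hγ0 : γ 0 = x) (hγ1 : γ 1 = h x)
    (hlam_gamma : ∀ t ∈ Set.Icc (0:ℝ) 1, lam (γ t) (deriv γ t) = 0)
    (hlam_g_gamma : ∀ t ∈ Set.Icc (0:ℝ) 1, lam (g (γ t)) (deriv (g ∘ γ) t) = 0) :
    ILM x lam g h = 0 := by
  classical
  set ω : EuclideanSpace ℝ (Fin m) → (EuclideanSpace ℝ (Fin m) →L[ℝ] ℝ) :=
    fun y => oneFormPullback g lam y - lam y with hωdef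
  have hω : ContDiff ℝ (⊤ : ℕ∞) ω := by
    apply ContDiff.sub _ hlam
    exact ContDiff.clm_comp (hlam.comp hg) (hg.fderiv_right (by simp))
  obtain ⟨f, hf⟩ := closed_primitive ω hω hgs x
  have hωc : Continuous ω := hω.continuous
  -- Step A: the ILM cocycle is f (h x) - f x
  have hσ' : ∀ t : ℝ, HasDerivAt (fun t : ℝ => x + t • (h x - x)) (h x - x) t := by
    intro t
    have : HasDerivAt (fun t : ℝ => t • (h x - x)) ((1:ℝ) • (h x - x)) t :=
      (hasDerivAt_id t).smul_const (h x - x)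
    simpa using this.const_add x
  have hA : ILM x lam g h = f (h x) - f x := by
    have h1 : ∀ t : ℝ, HasDerivAt (fun t : ℝ => f (x + t • (h x - x)))
        (ω (x + t • (h x - x)) (h x - x)) t := by
      intro t
      exact (hf (x + t • (h x - x))).comp_hasDerivAt t (hσ' t)
    have hcont : Continuous fun t : ℝ => ω (x + t • (h x - x)) (h x - x) :=
      (hωc.comp (by fun_prop)).clm_apply continuous_const
    have h2 := intervalIntegral.integral_eq_sub_of_hasDerivAt
      (f := fun t : ℝ => f (x + t • (h x - x)))
      (f' := fun t : ℝ => ω (x + t • (h x - x)) (h x - x)) (a := 0) (b := 1)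
      (fun t _ => h1 t) (hcont.intervalIntegrable _ _)
    have hILM : ILM x lam g h = ∫ t in (0:ℝ)..1, ω (x + t • (h x - x)) (h x - x) := rfl
    rw [hILM, h2]
    norm_num
  -- Step B: the integral along γ is f (h x) - f x and vanishes
  have hγd : Differentiable ℝ γ := hγ.differentiable one_ne_zero
  have hγderivc : Continuous (deriv γ) := hγ.continuous_deriv le_rfl
  have hB : (∫ t in (0:ℝ)..1, ω (γ t) (deriv γ t)) = f (γ 1) - f (γ 0) := by
    exact intervalIntegral.integral_eq_sub_of_hasDerivAt (f := fun t => f (γ t))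
      (fun t _ => (hf (γ t)).comp_hasDerivAt t (hγd t).hasDerivAt)
      (((hωc.comp hγ.continuous).clm_apply hγderivc).intervalIntegrable _ _)
  have hzero : (∫ t in (0:ℝ)..1, ω (γ t) (deriv γ t)) = 0 := by
    have hcg : ∀ t ∈ Set.uIcc (0:ℝ) 1, ω (γ t) (deriv γ t) = (fun _ : ℝ => (0:ℝ)) t := by
      intro t ht
      rw [Set.uIcc_of_le (zero_le_one (α := ℝ))] at ht
      have hchain : deriv (g ∘ γ) t = (fderiv ℝ g (γ t)) (deriv γ t) :=
        ((hg.differentiable (by simp) (γ t)).hasFDerivAt.comp_hasDerivAt t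
          (hγd t).hasDerivAt).deriv
      have e1 : ω (γ t) (deriv γ t) =
          lam (g (γ t)) ((fderiv ℝ g (γ t)) (deriv γ t)) - lam (γ t) (deriv γ t) := rfl
      rw [e1, ← hchain, hlam_g_gamma t ht, hlam_gamma t ht, sub_zero]
    rw [intervalIntegral.integral_congr hcg]
    simp
  rw [hA, ← hγ1, ← hγ0, ← hB, hzero]


end
end
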